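/- Let μ̃ be the bilinear skew-symmetric map on ℝ^7 with nonzero basis brackets [e1,e2]=(3√141/188)e3+(√1551/188)e4, [e1,e3]=(3√517/188)e5, [e1,e4]=(3√47/188)e5, [e1,e5]=(√282/47)e7, [e2,e3]=(√94/94)e7, [e2,e4]=(√1222/94)e6. Then μ̃ satisfies the Jacobi identity, D = diag(1,2,3,3,4,5,5) is a derivation of (ℝ^7,μ̃), and m(μ̃) = -(89/94)·Id + (23/94)·D; in particular m(μ̃) = diag(-33/47,-43/94,-10/47,-10/47,3/94,13/47,13/47). -/

import Mathlib

/-!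
Every nonzero double bracket `[[e a, e b], e m]` of `μ̃` has `m ∈ {a, b}`. Hence in the Jacobi
sum of three distinct basis vectors every term vanishes, and when two of them coincide the sum
cancels by skew-symmetry. Each bracket `[e i, e j]` lies in the `dᵢ + dⱼ` eigenspace of
`D = diag d`, so `D` is a derivation. The moment map is computed in structure constants: an
off-diagonal entry vanishes term by term unless the two basis vectors share a bracket partner
and a bracket value, which happens only for `e 2` and `e 3` (indices from `0`); there the two
contributions cancel because `√141 · √1551 = 3 · √517 · √47`.
-/

open Finset

noncomputable section

/-- `ℝ⁷` with its standard basis and standard inner product. -/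
abbrev V7 : Type := Fin 7 → ℝ

/-- The standard basis vector `e i`. -/
def e (i : Fin 7) : V7 := Pi.single i 1

/-- The standard inner product on `ℝ⁷`. -/
def dot (x y : V7) : ℝ := ∑ i, x i * y i

/-- Structure constants built from a list of entries `(i, j, k, a)`, each meaning that
`μ (e i) (e j)` has component `a` along `e k` (and `μ (e j) (e i)` has component `-a`);
all unlisted basis brackets are `0`. -/
def toC (L : List (Fin 7 × Fin 7 × Fin 7 × ℝ)) (i j k : Fin 7) : ℝ :=
  (L.map fun t =>
      (if t.1 = i ∧ t.2.1 = j ∧ t.2.2.1 = k then t.2.2.2 else 0)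
    - (if t.1 = j ∧ t.2.1 = i ∧ t.2.2.1 = k then t.2.2.2 else 0)).sum

/-- The bilinear skew-symmetric map on `ℝ⁷` with structure constants `c`. -/
def br (c : Fin 7 → Fin 7 → Fin 7 → ℝ) (x y : V7) : V7 :=
  fun k => ∑ i, ∑ j, x i * y j * c i j k

lemma br_add_left (c : Fin 7 → Fin 7 → Fin 7 → ℝ) (x x' y : V7) :
    br c (x + x') y = br c x y + br c x' y := by
  funext k
  simp only [br, Pi.add_apply, ← Finset.sum_add_distrib]
  exact Finset.sum_congr rfl fun i _ => Finset.sum_congr rfl fun j _ => by ring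

lemma br_smul_left (c : Fin 7 → Fin 7 → Fin 7 → ℝ) (r : ℝ) (x y : V7) :
    br c (r • x) y = r • br c x y := by
  funext k
  simp only [br, Pi.smul_apply, smul_eq_mul, Finset.mul_sum]
  exact Finset.sum_congr rfl fun i _ => Finset.sum_congr rfl fun j _ => by ring

lemma br_add_right (c : Fin 7 → Fin 7 → Fin 7 → ℝ) (x y y' : V7) :
    br c x (y + y') = br c x y + br c x y' := by
  funext k
  simp only [br, Pi.add_apply, ← Finset.sum_add_distrib]
  exact Finset.sum_congr rfl fun i _ => Finset.sum_congr rfl fun j _ => by ring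

lemma br_smul_right (c : Fin 7 → Fin 7 → Fin 7 → ℝ) (r : ℝ) (x y : V7) :
    br c x (r • y) = r • br c x y := by
  funext k
  simp only [br, Pi.smul_apply, smul_eq_mul, Finset.mul_sum]
  exact Finset.sum_congr rfl fun i _ => Finset.sum_congr rfl fun j _ => by ring

lemma br_zero_left (c : Fin 7 → Fin 7 → Fin 7 → ℝ) (y : V7) : br c 0 y = 0 := by
  funext k; simp [br]

lemma br_zero_right (c : Fin 7 → Fin 7 → Fin 7 → ℝ) (x : V7) : br c x 0 = 0 := by
  funext k; simp [br]

/-- The space of derivations of the algebra `(ℝ⁷, br c)`, i.e. the linear maps `D` with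
`D (μ x y) = μ (D x) y + μ x (D y)` for all `x, y`, as a submodule of the endomorphisms. -/
def derivations (c : Fin 7 → Fin 7 → Fin 7 → ℝ) : Submodule ℝ (Module.End ℝ V7) where
  carrier := {D | ∀ x y, D (br c x y) = br c (D x) y + br c x (D y)}
  add_mem' := by
    intro D E hD hE x y
    simp only [LinearMap.add_apply, hD x y, hE x y, br_add_left, br_add_right]
    abel
  zero_mem' := by
    intro x y
    simp [br_zero_left, br_zero_right]
  smul_mem' := by
    intro r D hD x y
    simp only [LinearMap.smul_apply, hD x y, smul_add, br_smul_left, br_smul_right]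

/-- The Jacobi identity for the bracket `br c`. -/
def Jacobi (c : Fin 7 → Fin 7 → Fin 7 → ℝ) : Prop :=
  ∀ x y z : V7, br c (br c x y) z + br c (br c y z) x + br c (br c z x) y = 0

/-- Skew-symmetry of the bracket `br c`. -/
def Skew (c : Fin 7 → Fin 7 → Fin 7 → ℝ) : Prop :=
  ∀ x y : V7, br c x y = - br c y x

/-- The diagonal endomorphism `diag (a 1, …, a 7)` of `ℝ⁷`, `e i ↦ a i • e i`. -/
def diagL (a : Fin 7 → ℝ) : Module.End ℝ V7 :=
  LinearMap.pi fun i => a i • LinearMap.proj i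

/-- Structure constants of the bracket `μ̃`. -/
def c17 : Fin 7 → Fin 7 → Fin 7 → ℝ :=
  toC [(0, 1, 2, 3 * Real.sqrt 141 / 188),
   (0, 1, 3, Real.sqrt 1551 / 188),
   (0, 2, 4, 3 * Real.sqrt 517 / 188),
   (0, 3, 4, 3 * Real.sqrt 47 / 188),
   (0, 4, 6, Real.sqrt 282 / 47),
   (1, 2, 6, Real.sqrt 94 / 94),
   (1, 3, 5, Real.sqrt 1222 / 94)]

lemma dot_e (v : V7) (k : Fin 7) : dot v (e k) = v k := by
  simp [dot, e, Pi.single_apply]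

lemma diagL_apply (d : Fin 7 → ℝ) (x : V7) (k : Fin 7) : diagL d x k = d k * x k := rfl

lemma smul_one_add_smul_diagL (r s : ℝ) (d : Fin 7 → ℝ) :
    r • (1 : Module.End ℝ V7) + s • diagL d = diagL fun i => r + s * d i := by
  refine LinearMap.ext fun x => funext fun k => ?_
  simp only [LinearMap.add_apply, LinearMap.smul_apply, Module.End.one_apply, Pi.add_apply,
    Pi.smul_apply, smul_eq_mul, diagL_apply]
  ring

lemma eq_diagL_of_apply_e {f : Module.End ℝ V7} {d : Fin 7 → ℝ}
    (h : ∀ a k, f (e a) k = if a = k then d a else 0) : f = diagL d :=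
  (Pi.basisFun ℝ (Fin 7)).ext fun a => funext fun k => by
    rw [Pi.basisFun_apply]
    change f (e a) k = d k * e a k
    rw [h]
    by_cases hak : a = k
    · simp [hak, e]
    · simp [hak, e, Ne.symm hak]

section StructureConstants

variable (c : Fin 7 → Fin 7 → Fin 7 → ℝ)

lemma br_e_e (i j : Fin 7) : br c (e i) (e j) = c i j := by
  funext k
  simp [br, e, Pi.single_apply, ite_mul]

lemma skew_of_antisymm (hc : ∀ i j k, c j i k = -c i j k) : Skew c := by
  intro x y
  funext k
  simp only [br, Pi.neg_apply, ← Finset.sum_neg_distrib]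
  rw [Finset.sum_comm]
  exact sum_congr rfl fun i _ => sum_congr rfl fun j _ => by rw [hc]; ring

lemma br_br_apply (x y z : V7) (k : Fin 7) :
    br c (br c x y) z k = ∑ i, ∑ j, ∑ m, x i * y j * z m * ∑ l, c i j l * c l m k := by
  simp only [br, Finset.sum_mul, Finset.mul_sum]
  refine sum_comm_cycle.trans <| sum_congr rfl fun i _ => sum_comm_cycle.trans <|
    sum_congr rfl fun j _ => sum_comm.trans <| sum_congr rfl fun m _ => sum_congr rfl fun l _ => ?_
  ring

lemma jacobi_of_structure_constants
    (h : ∀ i j m k, ∑ l, (c i j l * c l m k + c j m l * c l i k + c m i l * c l j k) = 0) :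
    Jacobi c := by
  intro x y z
  funext k
  let A i j m := ∑ l, c i j l * c l m k
  have hyzx : ∑ i, ∑ j, ∑ m, y i * z j * x m * A i j m =
      ∑ a, ∑ b, ∑ d, x a * y b * z d * A b d a :=
    sum_comm_cycle.trans <| by simp only [mul_comm, mul_left_comm]
  have hzxy : ∑ i, ∑ j, ∑ m, z i * x j * y m * A i j m =
      ∑ a, ∑ b, ∑ d, x a * y b * z d * A d a b :=
    sum_comm_cycle.symm.trans <| by simp only [mul_comm, mul_left_comm]
  rw [Pi.add_apply, Pi.add_apply, br_br_apply, br_br_apply, br_br_apply]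
  change _ + (∑ i, ∑ j, ∑ m, y i * z j * x m * A i j m)
    + (∑ i, ∑ j, ∑ m, z i * x j * y m * A i j m) = 0
  simp only [hyzx, hzxy, ← sum_add_distrib, ← mul_add]
  refine sum_eq_zero fun a _ => sum_eq_zero fun b _ => sum_eq_zero fun d _ => ?_
  simp only [A, ← sum_add_distrib, h, mul_zero]

lemma structure_jacobi_of_antisymm (hc : ∀ i j k, c j i k = -c i j k)
    (hv : ∀ a b l m k, m ≠ a → m ≠ b → c a b l * c l m k = 0) (i j m k : Fin 7) :
    ∑ l, (c i j l * c l m k + c j m l * c l i k + c m i l * c l j k) = 0 := by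
  refine sum_eq_zero fun l _ => ?_
  by_cases hij : i = j
  · subst hij
    linear_combination c l m k / 2 * hc i i l + c l i k * hc i m l
  by_cases hjm : j = m
  · subst hjm
    linear_combination c l i k / 2 * hc j j l + c l j k * hc i j l
  by_cases hmi : m = i
  · subst hmi
    linear_combination c l m k * hc m j l + c l j k / 2 * hc m m l
  rw [hv i j l m k hmi (Ne.symm hjm), hv j m l i k hij (Ne.symm hmi),
    hv m i l j k hjm (Ne.symm hij)]
  ring

lemma diagL_mem_derivations (d : Fin 7 → ℝ) (h : ∀ i j k, c i j k ≠ 0 → d k = d i + d j) :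
    diagL d ∈ derivations c := by
  intro x y
  funext k
  simp only [diagL_apply, br, Pi.add_apply, mul_sum, ← sum_add_distrib]
  refine sum_congr rfl fun i _ => sum_congr rfl fun j _ => ?_
  rcases eq_or_ne (c i j k) 0 with hc | hc
  · simp [hc]
  · rw [h i j k hc]; ring

/-- The entry `⟨m(μ) e a, e k⟩` of the moment map in structure constants. -/
def momentEntry (a k : Fin 7) : ℝ :=
  -2 * ∑ i, ∑ j, c a i j * c k i j + ∑ i, ∑ j, c i j a * c i j k

lemma momentEntry_comm (a k : Fin 7) : momentEntry c a k = momentEntry c k a := by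
  simp only [momentEntry, mul_comm (c a _ _), mul_comm (c _ _ a)]

lemma apply_e_eq_momentEntry (m : Module.End ℝ V7)
    (hm : ∀ x y : V7, dot (m x) y =
      -2 * ∑ i, ∑ j, dot (br c x (e i)) (e j) * dot (br c y (e i)) (e j)
      + ∑ i, ∑ j, dot (br c (e i) (e j)) x * dot (br c (e i) (e j)) y) (a k : Fin 7) :
    m (e a) k = momentEntry c a k := by
  simpa only [dot_e, br_e_e, momentEntry] using hm (e a) (e k)

end StructureConstants

lemma toC_swap (L : List (Fin 7 × Fin 7 × Fin 7 × ℝ)) (i j k : Fin 7) :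
    toC L j i k = -toC L i j k := by
  induction L with
  | nil => simp [toC]
  | cons t L ih => simp only [toC, List.map_cons, List.sum_cons] at ih ⊢; rw [ih]; ring

def toCSupport (L : List (Fin 7 × Fin 7 × Fin 7 × ℝ)) : List (Fin 7 × Fin 7 × Fin 7) :=
  L.flatMap fun t => [(t.1, t.2.1, t.2.2.1), (t.2.1, t.1, t.2.2.1)]

lemma mem_toCSupport_of_toC_ne_zero {L : List (Fin 7 × Fin 7 × Fin 7 × ℝ)} {i j k : Fin 7}
    (h : toC L i j k ≠ 0) : (i, j, k) ∈ toCSupport L := by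
  induction L with
  | nil => simp [toC] at h
  | cons t L ih =>
    change (_ - _) + toC L i j k ≠ 0 at h
    simp only [toCSupport, List.flatMap_cons, List.mem_append, List.mem_cons, List.not_mem_nil,
      or_false]
    split_ifs at h with h₁ h₂ h₂
    · obtain ⟨rfl, rfl, rfl⟩ := h₁; simp
    · obtain ⟨rfl, rfl, rfl⟩ := h₁; simp
    · obtain ⟨rfl, rfl, rfl⟩ := h₂; simp
    · exact Or.inr (ih (by simpa using h))

def support17 : List (Fin 7 × Fin 7 × Fin 7) :=
  [(0, 1, 2), (1, 0, 2), (0, 1, 3), (1, 0, 3), (0, 2, 4), (2, 0, 4), (0, 3, 4), (3, 0, 4),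
   (0, 4, 6), (4, 0, 6), (1, 2, 6), (2, 1, 6), (1, 3, 5), (3, 1, 5)]

lemma mem_support17 {i j k : Fin 7} (h : c17 i j k ≠ 0) : (i, j, k) ∈ support17 :=
  mem_toCSupport_of_toC_ne_zero h

lemma c17_mul_c17_eq_zero {a b l m k : Fin 7} (ha : m ≠ a) (hb : m ≠ b) :
    c17 a b l * c17 l m k = 0 := by
  have hsupp : ∀ p ∈ support17, ∀ q ∈ support17, q.1 = p.2.2 → q.2.1 = p.1 ∨ q.2.1 = p.2.1 := by
    decide +kernel
  by_contra h
  obtain ⟨h₁, h₂⟩ := mul_ne_zero_iff.mp h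
  rcases hsupp _ (mem_support17 h₁) _ (mem_support17 h₂) rfl with h | h
  exacts [ha h, hb h]

lemma jacobi_c17 : Jacobi c17 :=
  jacobi_of_structure_constants c17 <|
    structure_jacobi_of_antisymm c17 (toC_swap _) fun _ _ _ _ _ => c17_mul_c17_eq_zero

lemma diagL_mem_derivations_c17 : diagL ![1, 2, 3, 3, 4, 5, 5] ∈ derivations c17 := by
  have hgraded : ∀ p ∈ support17, (![1, 2, 3, 3, 4, 5, 5] : Fin 7 → ℝ) p.2.2 =
      ![1, 2, 3, 3, 4, 5, 5] p.1 + ![1, 2, 3, 3, 4, 5, 5] p.2.1 := by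
    simp [support17]
    norm_num
  exact diagL_mem_derivations c17 _ fun i j k h => hgraded _ (mem_support17 h)

lemma sqrt_141_mul_sqrt_1551 : √141 * √1551 = 3 * (√517 * √47) := by
  rw [← Real.sqrt_mul (by norm_num), ← Real.sqrt_mul (by norm_num),
    show (141 * 1551 : ℝ) = 3 ^ 2 * (517 * 47) by norm_num, Real.sqrt_mul (by norm_num),
    Real.sqrt_sq (by norm_num)]

lemma momentEntry_c17_self (a : Fin 7) :
    momentEntry c17 a a = ![-33/47, -43/94, -10/47, -10/47, 3/94, 13/47, 13/47] a := by
  fin_cases a <;>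
  · simp [momentEntry, Fin.sum_univ_seven, c17, toC]
    ring_nf
    norm_num [Real.sq_sqrt]

lemma momentEntry_c17_two_three : momentEntry c17 2 3 = 0 := by
  simp [momentEntry, Fin.sum_univ_seven, c17, toC]
  ring_nf
  rw [sqrt_141_mul_sqrt_1551]
  ring

lemma momentEntry_c17_of_ne {a k : Fin 7} (hak : a ≠ k) : momentEntry c17 a k = 0 := by
  by_cases h23 : a = 2 ∧ k = 3 ∨ a = 3 ∧ k = 2
  · rcases h23 with ⟨rfl, rfl⟩ | ⟨rfl, rfl⟩
    exacts [momentEntry_c17_two_three, (momentEntry_comm _ _ _).trans momentEntry_c17_two_three]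
  have hleft : ∀ p ∈ support17, ∀ q ∈ support17, p.2 = q.2 →
      p.1 = q.1 ∨ p.1 = 2 ∧ q.1 = 3 ∨ p.1 = 3 ∧ q.1 = 2 := by
    decide +kernel
  have hright : ∀ p ∈ support17, ∀ q ∈ support17, p.1 = q.1 → p.2.1 = q.2.1 →
      p.2.2 = q.2.2 ∨ p.2.2 = 2 ∧ q.2.2 = 3 ∨ p.2.2 = 3 ∧ q.2.2 = 2 := by
    decide +kernel
  have hzero : ∀ i j, c17 a i j * c17 k i j = 0 ∧ c17 i j a * c17 i j k = 0 := by
    intro i j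
    constructor <;> by_contra h <;> obtain ⟨h₁, h₂⟩ := mul_ne_zero_iff.mp h
    · rcases hleft _ (mem_support17 h₁) _ (mem_support17 h₂) rfl with h | h
      exacts [hak h, h23 h]
    · rcases hright _ (mem_support17 h₁) _ (mem_support17 h₂) rfl rfl with h | h
      exacts [hak h, h23 h]
  simp [momentEntry, hzero]

/-- The bracket satisfies the Jacobi identity (and is skew-symmetric),
`D` is a derivation of it, and the unnormalized moment map `m(μ̃)` — i.e. the endomorphism
`m` of `ℝ⁷` determined by
`⟨m x, y⟩ = -2 ∑ᵢⱼ ⟨μ̃(x,eᵢ),eⱼ⟩⟨μ̃(y,eᵢ),eⱼ⟩ + ∑ᵢⱼ ⟨μ̃(eᵢ,eⱼ),x⟩⟨μ̃(eᵢ,eⱼ),y⟩` —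
equals `-(89/94) • Id + 23/94 • D`, which is the indicated diagonal map. -/
theorem stmt :
    Skew c17 ∧ Jacobi c17 ∧
    diagL ![1, 2, 3, 3, 4, 5, 5] ∈ derivations c17 ∧
    ∀ m : Module.End ℝ V7,
      (∀ x y : V7, dot (m x) y =
          -2 * ∑ i, ∑ j, dot (br c17 x (e i)) (e j) * dot (br c17 y (e i)) (e j)
          + ∑ i, ∑ j, dot (br c17 (e i) (e j)) x * dot (br c17 (e i) (e j)) y) →
      m = (-(89/94) : ℝ) • (1 : Module.End ℝ V7) + (23/94 : ℝ) • diagL ![1, 2, 3, 3, 4, 5, 5]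
      ∧ m = diagL ![-33/47, -43/94, -10/47, -10/47, 3/94, 13/47, 13/47] := by
  refine ⟨skew_of_antisymm c17 (toC_swap _), jacobi_c17, diagL_mem_derivations_c17,
    fun m hm => ?_⟩
  have hdiag : m = diagL ![-33/47, -43/94, -10/47, -10/47, 3/94, 13/47, 13/47] := by
    refine eq_diagL_of_apply_e fun a k => ?_
    rw [apply_e_eq_momentEntry c17 m hm]
    split_ifs with hak
    · rw [hak, momentEntry_c17_self]
    · exact momentEntry_c17_of_ne hak
  refine ⟨hdiag.trans ?_, hdiag⟩
  rw [smul_one_add_smul_diagL]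
  congr 1
  funext i
  fin_cases i <;> norm_num
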